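/- arXiv:hep-th/9911214 — 2 statements merged into one kernel-verified Lean document; each statement's English description precedes it below -/
import Mathlib

section
/- Let A be an associative unital ring, ι a finite set, and T a map from subsets of ι to A with T(∅) = 1; let T̄ be the associated antichronological products. Then for every nonempty Z ⊆ ι both identities hold: Σ_{X ⊔ Y = Z} (−1)^{|X|} T(X)·T̄(Y) = 0 and Σ_{X ⊔ Y = Z} (−1)^{|X|} T̄(X)·T(Y) = 0, where the sums run over all partitions of Z into disjoint (possibly empty) subsets X and Y. -/
/-- Sum over all ordered partitions of `X` into `r ≥ 1` nonempty pairwise disjoint blocks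
`X₁, …, X_r` of `(-1)^r * T X₁ * ⋯ * T X_r` (with value `1` for `X = ∅`), computed by peeling
off the first block. -/
def opSum {A : Type*} [Ring A] {ι : Type*} [DecidableEq ι]
    (T : Finset ι → A) (X : Finset ι) : A :=
  if _hX : X = ∅ then 1
  else
    ∑ Y ∈ (X.powerset.filter (fun Y => Y ≠ ∅)).attach,
      (-1 : A) * T Y.1 * opSum T (X \ Y.1)
termination_by X.card
decreasing_by
  have hY := Y.2
  simp only [Finset.mem_filter, Finset.mem_powerset] at hY
  have h1 : Y.1.card ≤ X.card := Finset.card_le_card hY.1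
  have h2 : 0 < Y.1.card := Finset.card_pos.mpr (Finset.nonempty_iff_ne_empty.mpr hY.2)
  rw [Finset.card_sdiff_of_subset hY.1]
  omega

/-- The antichronological products `T̄`, defined by `T̄(∅) = 1` and
`(−1)^{|X|} T̄(X) = Σ_{r=1}^{|X|} (−1)^r Σ T(X₁)⋯T(X_r)`, the inner sum running over all ordered
partitions of `X` into `r` nonempty pairwise disjoint subsets. -/
def chronoBar {A : Type*} [Ring A] {ι : Type*} [DecidableEq ι]
    (T : Finset ι → A) (X : Finset ι) : A :=
  (-1 : A) ^ X.card * opSum T X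

/-!
Let `⋆` be the subset convolution `(f ⋆ g)(Z) = Σ_{X ⊆ Z} f(X) g(Z \ X)` and `δ` its unit.
Peeling off the first block shows `T ⋆ opSum T = δ`, so the first identity holds. For the
second we need `opSum T ⋆ T = δ`. Since `opSum T (∅) = 1`, the same argument gives `opSum T`
a right inverse `U`, and associativity forces `U = T`. Associativity comes for free by
viewing `f` as the element `(s, t) ↦ f (t \ s)` of the incidence algebra of `Finset ι`.
The signs in `T̄` cancel: `(-1)^{|X|} (-1)^{|Z \ X|} = (-1)^{|Z|}` and `((-1)^{|X|})² = 1`.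
-/

open Finset

namespace IncidenceAlgebra

variable {A ι : Type*} [DecidableEq ι]

def ofSdiff [Zero A] (f : Finset ι → A) : IncidenceAlgebra A (Finset ι) :=
  ⟨fun s t => if s ⊆ t then f (t \ s) else 0, fun _ _ h => if_neg h⟩

lemma ofSdiff_apply [Zero A] (f : Finset ι → A) {s t : Finset ι} (h : s ⊆ t) :
    ofSdiff f s t = f (t \ s) :=
  if_pos h

lemma ofSdiff_mul_ofSdiff_apply [NonUnitalNonAssocSemiring A] (f g : Finset ι → A)
    {s t : Finset ι} (h : s ⊆ t) :
    (ofSdiff f * ofSdiff g) s t = ∑ X ∈ (t \ s).powerset, f X * g ((t \ s) \ X) := by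
  have hdisj : ∀ X ∈ (t \ s).powerset, Disjoint s X := fun X hX =>
    disjoint_of_subset_right (mem_powerset.1 hX) disjoint_sdiff
  rw [mul_apply, Icc_eq_image_powerset h, sum_image]
  · refine sum_congr rfl fun X hX => ?_
    have hXt : X ⊆ t := (mem_powerset.1 hX).trans sdiff_subset
    rw [ofSdiff_apply f subset_union_left, ofSdiff_apply g (union_subset h hXt),
      union_sdiff_cancel_left (hdisj X hX), sdiff_sdiff_left, sup_eq_union]
  · intro X hX Y hY hXY
    rw [← union_sdiff_cancel_left (hdisj X hX), ← union_sdiff_cancel_left (hdisj Y hY)]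
    exact congrArg (· \ s) hXY

lemma ofSdiff_mul_ofSdiff_eq_one [NonAssocSemiring A] {f g : Finset ι → A}
    (h : ∀ Z, ∑ X ∈ Z.powerset, f X * g (Z \ X) = if Z = ∅ then 1 else 0) :
    ofSdiff f * ofSdiff g = 1 := by
  ext s t hst
  rw [ofSdiff_mul_ofSdiff_apply f g hst, h, one_apply]
  exact if_congr (sdiff_eq_empty_iff_subset.trans ⟨hst.antisymm, fun h => h ▸ subset_rfl⟩) rfl rfl

end IncidenceAlgebra

section opSum

open IncidenceAlgebra

variable {A ι : Type*} [Ring A] [DecidableEq ι]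

@[simp]
lemma opSum_empty (T : Finset ι → A) : opSum T ∅ = 1 := by
  rw [opSum, dif_pos rfl]

lemma opSum_eq_neg_sum (T : Finset ι → A) {Z : Finset ι} (hZ : Z ≠ ∅) :
    opSum T Z = -∑ Y ∈ Z.powerset.erase ∅, T Y * opSum T (Z \ Y) := by
  rw [opSum, dif_neg hZ, sum_attach _ fun Y => -1 * T Y * opSum T (Z \ Y), ← filter_ne',
    ← sum_neg_distrib]
  simp only [neg_mul, one_mul]

lemma sum_powerset_mul_opSum {T : Finset ι → A} (hT : T ∅ = 1) (Z : Finset ι) :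
    ∑ X ∈ Z.powerset, T X * opSum T (Z \ X) = if Z = ∅ then 1 else 0 := by
  split_ifs with hZ
  · simp [hZ, hT]
  · rw [← add_sum_erase _ _ (empty_mem_powerset Z), hT, one_mul, sdiff_empty,
      ← neg_eq_iff_add_eq_zero, opSum_eq_neg_sum T hZ, neg_neg]

lemma ofSdiff_mul_ofSdiff_opSum {T : Finset ι → A} (hT : T ∅ = 1) :
    ofSdiff T * ofSdiff (opSum T) = 1 :=
  ofSdiff_mul_ofSdiff_eq_one (sum_powerset_mul_opSum hT)

lemma ofSdiff_opSum_mul_ofSdiff {T : Finset ι → A} (hT : T ∅ = 1) :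
    ofSdiff (opSum T) * ofSdiff T = 1 := by
  have hU := ofSdiff_mul_ofSdiff_opSum (opSum_empty T)
  rwa [left_inv_eq_right_inv (ofSdiff_mul_ofSdiff_opSum hT) hU]

lemma sum_powerset_opSum_mul {T : Finset ι → A} (hT : T ∅ = 1) (Z : Finset ι) :
    ∑ X ∈ Z.powerset, opSum T X * T (Z \ X) = if Z = ∅ then 1 else 0 := by
  have h := congrArg (fun F => F ∅ Z) (ofSdiff_opSum_mul_ofSdiff hT)
  rw [ofSdiff_mul_ofSdiff_apply _ _ (empty_subset Z), sdiff_empty, one_apply] at h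
  simpa only [eq_comm (a := (∅ : Finset ι))] using h

lemma neg_one_pow_card_mul_mul_chronoBar_sdiff (T : Finset ι → A) {X Z : Finset ι} (h : X ⊆ Z)
    (a : A) :
    (-1) ^ #X * (a * chronoBar T (Z \ X)) = (-1) ^ #Z * (a * opSum T (Z \ X)) := by
  rw [chronoBar, ((Commute.neg_one_right a).pow_right _).left_comm, ← mul_assoc, ← pow_add,
    add_comm, card_sdiff_add_card_eq_card h]

lemma neg_one_pow_card_mul_chronoBar_mul (T : Finset ι → A) (X : Finset ι) (a : A) :
    (-1) ^ #X * (chronoBar T X * a) = opSum T X * a := by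
  rw [chronoBar, mul_assoc, ← mul_assoc, ← pow_add, Even.neg_one_pow ⟨_, rfl⟩, one_mul]

end opSum

theorem chrono_antichrono_identities_general {A : Type*} [Ring A] {ι : Type*} [DecidableEq ι]
    (T : Finset ι → A) (hT1 : T ∅ = 1) (Z : Finset ι) (hZ : Z ≠ ∅) :
    (∑ X ∈ Z.powerset, (-1 : A) ^ X.card * (T X * chronoBar T (Z \ X)) = 0) ∧
    (∑ X ∈ Z.powerset, (-1 : A) ^ X.card * (chronoBar T X * T (Z \ X)) = 0) := by
  have h₁ := sum_powerset_mul_opSum hT1 Z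
  have h₂ := sum_powerset_opSum_mul hT1 Z
  rw [if_neg hZ] at h₁ h₂
  constructor
  · rw [sum_congr rfl fun X hX =>
      neg_one_pow_card_mul_mul_chronoBar_sdiff T (mem_powerset.1 hX) (T X), ← mul_sum, h₁,
      mul_zero]
  · simpa only [neg_one_pow_card_mul_chronoBar_mul] using h₂

/-- For every nonempty `Z`, `Σ_{X ⊔ Y = Z} (−1)^{|X|} T(X)·T̄(Y) = 0` and
`Σ_{X ⊔ Y = Z} (−1)^{|X|} T̄(X)·T(Y) = 0`. -/
theorem chrono_antichrono_identities {A : Type*} [Ring A] {ι : Type*} [Fintype ι] [DecidableEq ι]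
    (T : Finset ι → A) (hT1 : T ∅ = 1) (Z : Finset ι) (hZ : Z ≠ ∅) :
    (∑ X ∈ Z.powerset, (-1 : A) ^ X.card * (T X * chronoBar T (Z \ X)) = 0) ∧
    (∑ X ∈ Z.powerset, (-1 : A) ^ X.card * (chronoBar T X * T (Z \ X)) = 0) :=
  chrono_antichrono_identities_general T hT1 Z hZ
end

section
/- Assume the gauge-invariance identity [Q, T(S)] = i Σ_{l∈S} Σ_{μ=0}^{3} ∂T^μ_l(S)/∂x_l^μ holds for every subset S of {1,…,n}. Then the antichronological products satisfy the same identity: [Q, T̄(S)] = i Σ_{l∈S} Σ_{μ=0}^{3} ∂T̄^μ_l(S)/∂x_l^μ for every subset S of {1,…,n}, pointwise on (ℝ⁴)ⁿ. -/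
/-- Sum over all ordered partitions of `X` into `r ≥ 1` nonempty pairwise disjoint blocks of
`(-1)^r * T X₁ ⋯ T' X_k ⋯ T X_r`, with `T'` replacing `T` in exactly one block (value `0` for
`X = ∅`), computed by peeling off the first block. -/
def opSumD {A : Type*} [Ring A] {ι : Type*} [DecidableEq ι]
    (T T' : Finset ι → A) (X : Finset ι) : A :=
  if _hX : X = ∅ then 0
  else
    ∑ Y ∈ (X.powerset.filter (fun Y => Y ≠ ∅)).attach,
      (-1 : A) * (T' Y.1 * opSum T (X \ Y.1) + T Y.1 * opSumD T T' (X \ Y.1))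
termination_by X.card
decreasing_by
  have hY := Y.2
  simp only [Finset.mem_filter, Finset.mem_powerset] at hY
  have h1 : Y.1.card ≤ X.card := Finset.card_le_card hY.1
  have h2 : 0 < Y.1.card := Finset.card_pos.mpr (Finset.nonempty_iff_ne_empty.mpr hY.2)
  rw [Finset.card_sdiff_of_subset hY.1]
  omega

/-- The barred family `T̄'`, defined by `T̄'(∅) = 0` and
`(−1)^{|X|} T̄'(X) = Σ_{r=1}^{|X|} (−1)^r Σ Σ_{k=1}^{r} T(X₁)⋯T'(X_k)⋯T(X_r)`, the inner sum over
ordered partitions of `X` into `r` nonempty pairwise disjoint blocks, with `T'` replacing `T`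
in exactly one block. -/
def chronoBarD {A : Type*} [Ring A] {ι : Type*} [DecidableEq ι]
    (T T' : Finset ι → A) (X : Finset ι) : A :=
  (-1 : A) ^ X.card * opSumD T T' X

section Aux

lemma mem_blocks {ι : Type*} [DecidableEq ι] {X : Finset ι}
    {Y : {x // x ∈ (X.powerset.filter (fun Y => Y ≠ ∅))}} :
    Y.1 ⊆ X ∧ Y.1 ≠ ∅ := by
  have := Y.2
  simp only [Finset.mem_filter, Finset.mem_powerset] at this
  exact this

lemma opSum_ne {A : Type*} [Ring A] {ι : Type*} [DecidableEq ι]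
    (T : Finset ι → A) {X : Finset ι} (hX : X ≠ ∅) :
    opSum T X = ∑ Y ∈ (X.powerset.filter (fun Y => Y ≠ ∅)).attach,
      (-1 : A) * T Y.1 * opSum T (X \ Y.1) := by
  rw [opSum, dif_neg hX]

lemma opSumD_ne {A : Type*} [Ring A] {ι : Type*} [DecidableEq ι]
    (T T' : Finset ι → A) {X : Finset ι} (hX : X ≠ ∅) :
    opSumD T T' X = ∑ Y ∈ (X.powerset.filter (fun Y => Y ≠ ∅)).attach,
      (-1 : A) * (T' Y.1 * opSum T (X \ Y.1) + T Y.1 * opSumD T T' (X \ Y.1)) := by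
  rw [opSumD, dif_neg hX]

variable {A : Type*} [NormedRing A] [NormedAlgebra ℝ A] {n : ℕ}

lemma contDiff_opSum (T : Finset (Fin n) → (Fin n → Fin 4 → ℝ) → A)
    (hT : ∀ S, ContDiff ℝ (⊤ : ℕ∞) (T S)) (X : Finset (Fin n)) :
    ContDiff ℝ (⊤ : ℕ∞) (opSum T X) := by
  induction X using Finset.strongInduction with
  | _ X ih =>
    by_cases hX : X = ∅
    · rw [opSum, dif_pos hX]; exact contDiff_const
    · rw [opSum_ne T hX, Finset.sum_fn]
      refine ContDiff.sum fun Y _ => ?_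
      simp only [Pi.mul_apply, Pi.neg_apply, Pi.one_apply]
      exact (contDiff_const.mul (hT Y.1)).mul
        (ih _ (Finset.sdiff_ssubset (mem_blocks (Y := Y)).1
          (Finset.nonempty_iff_ne_empty.mpr (mem_blocks (Y := Y)).2)))

lemma contDiff_opSumD (T T' : Finset (Fin n) → (Fin n → Fin 4 → ℝ) → A)
    (hT : ∀ S, ContDiff ℝ (⊤ : ℕ∞) (T S)) (hT' : ∀ S, ContDiff ℝ (⊤ : ℕ∞) (T' S)) (X : Finset (Fin n)) :
    ContDiff ℝ (⊤ : ℕ∞) (opSumD T T' X) := by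
  induction X using Finset.strongInduction with
  | _ X ih =>
    by_cases hX : X = ∅
    · rw [opSumD, dif_pos hX]; exact contDiff_const
    · rw [opSumD_ne T T' hX, Finset.sum_fn]
      refine ContDiff.sum fun Y _ => ?_
      have hss := Finset.sdiff_ssubset (mem_blocks (Y := Y)).1
        (Finset.nonempty_iff_ne_empty.mpr (mem_blocks (Y := Y)).2)
      simp only [Pi.mul_apply, Pi.add_apply, Pi.neg_apply, Pi.one_apply]
      exact contDiff_const.mul (((hT' Y.1).mul (contDiff_opSum T hT _)).add
        ((hT Y.1).mul (ih _ hss)))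

lemma opSum_dep (T : Finset (Fin n) → (Fin n → Fin 4 → ℝ) → A)
    (hTdep : ∀ S, ∀ p q : Fin n → Fin 4 → ℝ, (∀ i ∈ S, p i = q i) → T S p = T S q)
    (X : Finset (Fin n)) : ∀ p q : Fin n → Fin 4 → ℝ,
    (∀ i ∈ X, p i = q i) → opSum T X p = opSum T X q := by
  induction X using Finset.strongInduction with
  | _ X ih =>
    intro p q h
    by_cases hX : X = ∅
    · rw [opSum, dif_pos hX]; rfl
    · rw [opSum_ne T hX]
      simp only [Finset.sum_apply, Pi.mul_apply, Pi.neg_apply, Pi.one_apply]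
      refine Finset.sum_congr rfl fun Y _ => ?_
      have h1 := (mem_blocks (Y := Y)).1
      have hss := Finset.sdiff_ssubset h1
        (Finset.nonempty_iff_ne_empty.mpr (mem_blocks (Y := Y)).2)
      rw [hTdep Y.1 p q (fun i hi => h i (h1 hi)),
        ih _ hss p q (fun i hi => h i (Finset.sdiff_subset hi))]

lemma opSumD_dep (T T' : Finset (Fin n) → (Fin n → Fin 4 → ℝ) → A)
    (hTdep : ∀ S, ∀ p q : Fin n → Fin 4 → ℝ, (∀ i ∈ S, p i = q i) → T S p = T S q)
    (hT'dep : ∀ S, ∀ p q : Fin n → Fin 4 → ℝ, (∀ i ∈ S, p i = q i) → T' S p = T' S q)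
    (X : Finset (Fin n)) : ∀ p q : Fin n → Fin 4 → ℝ,
    (∀ i ∈ X, p i = q i) → opSumD T T' X p = opSumD T T' X q := by
  induction X using Finset.strongInduction with
  | _ X ih =>
    intro p q h
    by_cases hX : X = ∅
    · rw [opSumD, dif_pos hX]; rfl
    · rw [opSumD_ne T T' hX]
      simp only [Finset.sum_apply, Pi.mul_apply, Pi.add_apply, Pi.neg_apply, Pi.one_apply]
      refine Finset.sum_congr rfl fun Y _ => ?_
      have h1 := (mem_blocks (Y := Y)).1
      have hss := Finset.sdiff_ssubset h1
        (Finset.nonempty_iff_ne_empty.mpr (mem_blocks (Y := Y)).2)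
      rw [hTdep Y.1 p q (fun i hi => h i (h1 hi)),
        hT'dep Y.1 p q (fun i hi => h i (h1 hi)),
        opSum_dep T hTdep _ p q (fun i hi => h i (Finset.sdiff_subset hi)),
        ih _ hss p q (fun i hi => h i (Finset.sdiff_subset hi))]

lemma opSumD_zero (T T' : Finset (Fin n) → (Fin n → Fin 4 → ℝ) → A)
    (X : Finset (Fin n)) (h0 : ∀ Y ⊆ X, T' Y = 0) :
    opSumD T T' X = 0 := by
  induction X using Finset.strongInduction with
  | _ X ih =>
    by_cases hX : X = ∅
    · rw [opSumD, dif_pos hX]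
    · rw [opSumD_ne T T' hX]
      refine Finset.sum_eq_zero fun Y _ => ?_
      have h1 := (mem_blocks (Y := Y)).1
      have hss := Finset.sdiff_ssubset h1
        (Finset.nonempty_iff_ne_empty.mpr (mem_blocks (Y := Y)).2)
      rw [h0 Y.1 h1, ih _ hss (fun Z hZ => h0 Z (hZ.trans Finset.sdiff_subset))]
      simp

lemma fderiv_single_of_dep {f : (Fin n → Fin 4 → ℝ) → A} (hf : Differentiable ℝ f)
    {X : Finset (Fin n)}
    (hdep : ∀ p q : Fin n → Fin 4 → ℝ, (∀ i ∈ X, p i = q i) → f p = f q)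
    {l : Fin n} (hl : l ∉ X) (p : Fin n → Fin 4 → ℝ) (w : Fin 4 → ℝ) :
    fderiv ℝ f p (Pi.single l w) = 0 := by
  set v : Fin n → Fin 4 → ℝ := Pi.single l w with hv
  have hγ : HasDerivAt (fun t : ℝ => p + t • v) v 0 := by
    simpa using ((hasDerivAt_id (0 : ℝ)).smul_const v).const_add p
  have h1 : HasDerivAt (fun t : ℝ => f (p + t • v)) (fderiv ℝ f p v) 0 := by
    have h := (hf p).hasFDerivAt
    have h2 : HasFDerivAt f (fderiv ℝ f p) ((fun t : ℝ => p + t • v) 0) := by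
      simpa using h
    exact h2.comp_hasDerivAt 0 hγ
  have h2 : (fun t : ℝ => f (p + t • v)) = fun _ => f p := by
    funext t
    refine hdep _ _ fun i hi => ?_
    have hne : i ≠ l := fun h => hl (h ▸ hi)
    simp [hv, Pi.single_eq_of_ne hne]
  rw [h2] at h1
  exact h1.unique (hasDerivAt_const 0 (f p))

lemma fderiv_mul_apply {f g : (Fin n → Fin 4 → ℝ) → A} {p : Fin n → Fin 4 → ℝ}
    (hf : DifferentiableAt ℝ f p) (hg : DifferentiableAt ℝ g p)
    (v : Fin n → Fin 4 → ℝ) :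
    fderiv ℝ (fun q => f q * g q) p v =
      fderiv ℝ f p v * g p + f p * fderiv ℝ g p v := by
  rw [fderiv_fun_mul' hf hg]
  simp only [ContinuousLinearMap.add_apply, ContinuousLinearMap.smul_apply,
    ContinuousLinearMap.smulRight_apply, smul_eq_mul]
  exact add_comm _ _

end Aux

lemma main_comm {A : Type*} [NormedRing A] [NormedAlgebra ℂ A] {n : ℕ} (Q : A)
    (T : Finset (Fin n) → (Fin n → Fin 4 → ℝ) → A)
    (Tmu : Fin n → Fin 4 → Finset (Fin n) → (Fin n → Fin 4 → ℝ) → A)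
    (hTsmooth : ∀ S, ContDiff ℝ (⊤ : ℕ∞) (T S))
    (hTdep : ∀ S, ∀ p q : Fin n → Fin 4 → ℝ, (∀ i ∈ S, p i = q i) → T S p = T S q)
    (hTmu0 : ∀ l μ S, l ∉ S → Tmu l μ S = 0)
    (hTmusmooth : ∀ l μ S, ContDiff ℝ (⊤ : ℕ∞) (Tmu l μ S))
    (hgauge : ∀ S : Finset (Fin n), ∀ p : Fin n → Fin 4 → ℝ,
      Q * T S p - T S p * Q =
        Complex.I • ∑ l ∈ S, ∑ μ : Fin 4,
          fderiv ℝ (Tmu l μ S) p (Pi.single l (Pi.single μ (1 : ℝ)))) :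
    ∀ X : Finset (Fin n), ∀ p,
      Q * opSum T X p - opSum T X p * Q =
        Complex.I • ∑ l ∈ X, ∑ μ : Fin 4,
          fderiv ℝ (opSumD T (Tmu l μ) X) p (Pi.single l (Pi.single μ (1 : ℝ))) := by
  intro X
  induction X using Finset.strongInduction with
  | _ X ih =>
    intro p
    by_cases hX : X = ∅
    · subst hX
      rw [opSum, dif_pos rfl]
      simp
    · have hBdiff : ∀ Z : Finset (Fin n), Differentiable ℝ (opSum T Z) :=
        fun Z => (contDiff_opSum T hTsmooth Z).differentiable (by simp)
      have hDdiff : ∀ (l : Fin n) (μ : Fin 4) (Z : Finset (Fin n)),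
          Differentiable ℝ (opSumD T (Tmu l μ) Z) :=
        fun l μ Z => (contDiff_opSumD T _ hTsmooth (hTmusmooth l μ) Z).differentiable (by simp)
      have hTdiff : ∀ S, Differentiable ℝ (T S) := fun S => (hTsmooth S).differentiable (by simp)
      have hTmudiff : ∀ l μ S, Differentiable ℝ (Tmu l μ S) :=
        fun l μ S => (hTmusmooth l μ S).differentiable (by simp)
      have hDzero : ∀ (l : Fin n) (μ : Fin 4) (Z : Finset (Fin n)), l ∉ Z →
          opSumD T (Tmu l μ) Z = 0 :=
        fun l μ Z hl => opSumD_zero T _ Z (fun Y hY => hTmu0 l μ Y (fun hlY => hl (hY hlY)))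
      have hfd0 : ∀ v : Fin n → Fin 4 → ℝ,
          fderiv ℝ (0 : (Fin n → Fin 4 → ℝ) → A) p v = 0 := by
        intro v
        rw [show (0 : (Fin n → Fin 4 → ℝ) → A) = fun _ => (0 : A) from rfl]
        rw [fderiv_const_apply]
        rfl
      have hssub : ∀ Y : {x // x ∈ X.powerset.filter (fun Y => Y ≠ ∅)}, X \ Y.1 ⊂ X :=
        fun Y => Finset.sdiff_ssubset (mem_blocks (Y := Y)).1
          (Finset.nonempty_iff_ne_empty.mpr (mem_blocks (Y := Y)).2)
      have key : ∀ l ∈ X, ∀ μ : Fin 4,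
          fderiv ℝ (opSumD T (Tmu l μ) X) p (Pi.single l (Pi.single μ (1 : ℝ))) =
          ∑ Y ∈ (X.powerset.filter (fun Y => Y ≠ ∅)).attach,
            (-(fderiv ℝ (Tmu l μ Y.1) p (Pi.single l (Pi.single μ (1:ℝ))) * opSum T (X \ Y.1) p)
             + -(T Y.1 p *
                fderiv ℝ (opSumD T (Tmu l μ) (X \ Y.1)) p (Pi.single l (Pi.single μ (1:ℝ))))) := by
        intro l hl μ
        have hfun : opSumD T (Tmu l μ) X =
            fun q => ∑ Y ∈ (X.powerset.filter (fun Y => Y ≠ ∅)).attach,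
              (-1 : A) * (Tmu l μ Y.1 q * opSum T (X \ Y.1) q
                + T Y.1 q * opSumD T (Tmu l μ) (X \ Y.1) q) := by
          rw [opSumD_ne _ _ hX]
          funext q
          simp [Finset.sum_apply]
        have hdiffY : ∀ Y : {x // x ∈ X.powerset.filter (fun Y => Y ≠ ∅)},
            Differentiable ℝ (fun q => Tmu l μ Y.1 q * opSum T (X \ Y.1) q
              + T Y.1 q * opSumD T (Tmu l μ) (X \ Y.1) q) :=
          fun Y => ((hTmudiff l μ Y.1).mul (hBdiff _)).add ((hTdiff Y.1).mul (hDdiff l μ _))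
        rw [hfun, fderiv_fun_sum (fun Y _ => ((hdiffY Y).const_mul (-1 : A)).differentiableAt),
          ContinuousLinearMap.sum_apply]
        refine Finset.sum_congr rfl fun Y _ => ?_
        rw [fderiv_const_mul ((hdiffY Y) p) (-1 : A), ContinuousLinearMap.smul_apply,
          fderiv_fun_add ((hTmudiff l μ Y.1).fun_mul (hBdiff _)).differentiableAt
            ((hTdiff Y.1).fun_mul (hDdiff l μ _)).differentiableAt,
          ContinuousLinearMap.add_apply,
          fderiv_mul_apply ((hTmudiff l μ Y.1) p) ((hBdiff _) p),
          fderiv_mul_apply ((hTdiff Y.1) p) ((hDdiff l μ _) p)]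
        by_cases hlY : l ∈ Y.1
        · have hl' : l ∉ X \ Y.1 := fun h => (Finset.mem_sdiff.mp h).2 hlY
          have hB0 : fderiv ℝ (opSum T (X \ Y.1)) p (Pi.single l (Pi.single μ (1:ℝ))) = 0 :=
            fderiv_single_of_dep (hBdiff _) (opSum_dep T hTdep (X \ Y.1)) hl' p _
          have hD0 := hDzero l μ (X \ Y.1) hl'
          rw [hB0, hD0, hfd0]
          simp [smul_eq_mul]
        · have hTmuz := hTmu0 l μ Y.1 hlY
          have hT0 : fderiv ℝ (T Y.1) p (Pi.single l (Pi.single μ (1:ℝ))) = 0 :=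
            fderiv_single_of_dep (hTdiff _) (hTdep Y.1) hlY p _
          rw [hTmuz, hT0, hfd0]
          simp [smul_eq_mul]
      calc Q * opSum T X p - opSum T X p * Q
          = ∑ Y ∈ (X.powerset.filter (fun Y => Y ≠ ∅)).attach,
              (Q * ((-1 : A) * T Y.1 p * opSum T (X \ Y.1) p)
               - ((-1 : A) * T Y.1 p * opSum T (X \ Y.1) p) * Q) := by
            rw [opSum_ne T hX]
            simp only [Finset.sum_apply, Pi.mul_apply, Pi.neg_apply, Pi.one_apply]
            rw [Finset.mul_sum, Finset.sum_mul, ← Finset.sum_sub_distrib]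
        _ = ∑ Y ∈ (X.powerset.filter (fun Y => Y ≠ ∅)).attach,
              (-((Q * T Y.1 p - T Y.1 p * Q) * opSum T (X \ Y.1) p)
               + -(T Y.1 p * (Q * opSum T (X \ Y.1) p - opSum T (X \ Y.1) p * Q))) := by
            refine Finset.sum_congr rfl fun Y _ => ?_
            noncomm_ring
        _ = ∑ Y ∈ (X.powerset.filter (fun Y => Y ≠ ∅)).attach,
              (-((Complex.I • ∑ l ∈ Y.1, ∑ μ : Fin 4,
                    fderiv ℝ (Tmu l μ Y.1) p (Pi.single l (Pi.single μ (1:ℝ))))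
                  * opSum T (X \ Y.1) p)
               + -(T Y.1 p * (Complex.I • ∑ l ∈ X \ Y.1, ∑ μ : Fin 4,
                    fderiv ℝ (opSumD T (Tmu l μ) (X \ Y.1)) p
                      (Pi.single l (Pi.single μ (1:ℝ)))))) := by
            refine Finset.sum_congr rfl fun Y _ => ?_
            rw [← hgauge Y.1 p, ← ih (X \ Y.1) (hssub Y) p]
        _ = Complex.I • ∑ Y ∈ (X.powerset.filter (fun Y => Y ≠ ∅)).attach,
              (-((∑ l ∈ Y.1, ∑ μ : Fin 4,
                    fderiv ℝ (Tmu l μ Y.1) p (Pi.single l (Pi.single μ (1:ℝ))))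
                  * opSum T (X \ Y.1) p)
               + -(T Y.1 p * (∑ l ∈ X \ Y.1, ∑ μ : Fin 4,
                    fderiv ℝ (opSumD T (Tmu l μ) (X \ Y.1)) p
                      (Pi.single l (Pi.single μ (1:ℝ)))))) := by
            rw [Finset.smul_sum]
            refine Finset.sum_congr rfl fun Y _ => ?_
            rw [smul_add, smul_neg, smul_neg, smul_mul_assoc, mul_smul_comm]
        _ = Complex.I • ∑ Y ∈ (X.powerset.filter (fun Y => Y ≠ ∅)).attach,
              ((∑ l ∈ Y.1, ∑ μ : Fin 4,
                  -(fderiv ℝ (Tmu l μ Y.1) p (Pi.single l (Pi.single μ (1:ℝ)))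
                    * opSum T (X \ Y.1) p))
               + (∑ l ∈ X \ Y.1, ∑ μ : Fin 4,
                  -(T Y.1 p * fderiv ℝ (opSumD T (Tmu l μ) (X \ Y.1)) p
                      (Pi.single l (Pi.single μ (1:ℝ)))))) := by
            congr 1
            refine Finset.sum_congr rfl fun Y _ => ?_
            rw [Finset.sum_mul, Finset.mul_sum, ← Finset.sum_neg_distrib, ← Finset.sum_neg_distrib]
            congr 1
            · refine Finset.sum_congr rfl fun l _ => ?_
              rw [Finset.sum_mul, ← Finset.sum_neg_distrib]
            · refine Finset.sum_congr rfl fun l _ => ?_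
              rw [Finset.mul_sum, ← Finset.sum_neg_distrib]
        _ = Complex.I • ∑ Y ∈ (X.powerset.filter (fun Y => Y ≠ ∅)).attach,
              ((∑ l ∈ X, ∑ μ : Fin 4,
                  -(fderiv ℝ (Tmu l μ Y.1) p (Pi.single l (Pi.single μ (1:ℝ)))
                    * opSum T (X \ Y.1) p))
               + (∑ l ∈ X, ∑ μ : Fin 4,
                  -(T Y.1 p * fderiv ℝ (opSumD T (Tmu l μ) (X \ Y.1)) p
                      (Pi.single l (Pi.single μ (1:ℝ)))))) := by
            congr 1
            refine Finset.sum_congr rfl fun Y _ => ?_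
            congr 1
            · refine Finset.sum_subset (mem_blocks (Y := Y)).1 fun l _ hlY => ?_
              refine Finset.sum_eq_zero fun μ _ => ?_
              rw [hTmu0 l μ Y.1 hlY, hfd0]
              simp
            · refine Finset.sum_subset Finset.sdiff_subset fun l hlX hl' => ?_
              refine Finset.sum_eq_zero fun μ _ => ?_
              rw [hDzero l μ (X \ Y.1) hl', hfd0]
              simp
        _ = Complex.I • ∑ Y ∈ (X.powerset.filter (fun Y => Y ≠ ∅)).attach,
              ∑ l ∈ X, ∑ μ : Fin 4,
                (-(fderiv ℝ (Tmu l μ Y.1) p (Pi.single l (Pi.single μ (1:ℝ)))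
                    * opSum T (X \ Y.1) p)
                 + -(T Y.1 p * fderiv ℝ (opSumD T (Tmu l μ) (X \ Y.1)) p
                      (Pi.single l (Pi.single μ (1:ℝ))))) := by
            congr 1
            refine Finset.sum_congr rfl fun Y _ => ?_
            rw [← Finset.sum_add_distrib]
            refine Finset.sum_congr rfl fun l _ => ?_
            rw [← Finset.sum_add_distrib]
        _ = Complex.I • ∑ l ∈ X, ∑ μ : Fin 4,
              ∑ Y ∈ (X.powerset.filter (fun Y => Y ≠ ∅)).attach,
                (-(fderiv ℝ (Tmu l μ Y.1) p (Pi.single l (Pi.single μ (1:ℝ)))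
                    * opSum T (X \ Y.1) p)
                 + -(T Y.1 p * fderiv ℝ (opSumD T (Tmu l μ) (X \ Y.1)) p
                      (Pi.single l (Pi.single μ (1:ℝ))))) := by
            congr 1
            rw [Finset.sum_comm]
            exact Finset.sum_congr rfl fun l _ => Finset.sum_comm
        _ = Complex.I • ∑ l ∈ X, ∑ μ : Fin 4,
              fderiv ℝ (opSumD T (Tmu l μ) X) p (Pi.single l (Pi.single μ (1 : ℝ))) := by
            congr 1
            refine Finset.sum_congr rfl fun l hl => Finset.sum_congr rfl fun μ _ => ?_
            rw [key l hl μ]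

/-- If the gauge-invariance identity
`[Q, T(S)] = i Σ_{l∈S} Σ_{μ} ∂T^μ_l(S)/∂x_l^μ` holds for every subset `S` of `{1,…,n}`, then
the antichronological products satisfy the same identity, pointwise on `(ℝ⁴)ⁿ`. -/
theorem antichrono_gauge_invariance {A : Type*} [NormedRing A] [NormedAlgebra ℂ A]
    [CompleteSpace A] (n : ℕ) (Q : A)
    (T : Finset (Fin n) → (Fin n → Fin 4 → ℝ) → A)
    (Tmu : Fin n → Fin 4 → Finset (Fin n) → (Fin n → Fin 4 → ℝ) → A)
    (hT1 : T ∅ = 1)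
    (hTsmooth : ∀ S, ContDiff ℝ (⊤ : ℕ∞) (T S))
    (hTdep : ∀ S, ∀ p q : Fin n → Fin 4 → ℝ, (∀ i ∈ S, p i = q i) → T S p = T S q)
    (hTmu0 : ∀ l μ S, l ∉ S → Tmu l μ S = 0)
    (hTmusmooth : ∀ l μ S, ContDiff ℝ (⊤ : ℕ∞) (Tmu l μ S))
    (hTmudep : ∀ l μ S, ∀ p q : Fin n → Fin 4 → ℝ,
      (∀ i ∈ S, p i = q i) → Tmu l μ S p = Tmu l μ S q)
    (hgauge : ∀ S : Finset (Fin n), ∀ p : Fin n → Fin 4 → ℝ,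
      Q * T S p - T S p * Q =
        Complex.I • ∑ l ∈ S, ∑ μ : Fin 4,
          fderiv ℝ (Tmu l μ S) p (Pi.single l (Pi.single μ (1 : ℝ))))
    (S : Finset (Fin n)) (p : Fin n → Fin 4 → ℝ) :
    Q * chronoBar T S p - chronoBar T S p * Q =
      Complex.I • ∑ l ∈ S, ∑ μ : Fin 4,
        fderiv ℝ (chronoBarD T (Tmu l μ) S) p (Pi.single l (Pi.single μ (1 : ℝ))) := by
  have hmain := main_comm Q T Tmu hTsmooth hTdep hTmu0 hTmusmooth hgauge S p
  set c : A := (-1 : A) ^ S.card with hc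
  have hcomm : ∀ a : A, c * a = a * c :=
    fun a => ((Commute.neg_one_left a).pow_left S.card).eq
  have hBval : chronoBar T S p = c * opSum T S p := by
    simp [chronoBar, hc]
  have hDdiff : ∀ (l : Fin n) (μ : Fin 4), Differentiable ℝ (opSumD T (Tmu l μ) S) :=
    fun l μ => (contDiff_opSumD T _ hTsmooth (hTmusmooth l μ) S).differentiable (by simp)
  have hRHS : ∀ (l : Fin n) (μ : Fin 4),
      fderiv ℝ (chronoBarD T (Tmu l μ) S) p (Pi.single l (Pi.single μ (1:ℝ))) =
      c * fderiv ℝ (opSumD T (Tmu l μ) S) p (Pi.single l (Pi.single μ (1:ℝ))) := by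
    intro l μ
    have hDfun : chronoBarD T (Tmu l μ) S = fun q => c * opSumD T (Tmu l μ) S q := by
      funext q
      simp [chronoBarD, hc]
    rw [hDfun, fderiv_const_mul ((hDdiff l μ) p) c, ContinuousLinearMap.smul_apply,
      smul_eq_mul]
  rw [hBval]
  calc Q * (c * opSum T S p) - c * opSum T S p * Q
      = c * (Q * opSum T S p - opSum T S p * Q) := by
        rw [mul_sub, ← mul_assoc, ← hcomm Q, mul_assoc, mul_assoc]
    _ = c * (Complex.I • ∑ l ∈ S, ∑ μ : Fin 4,
          fderiv ℝ (opSumD T (Tmu l μ) S) p (Pi.single l (Pi.single μ (1:ℝ)))) := by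
        rw [hmain]
    _ = Complex.I • ∑ l ∈ S, ∑ μ : Fin 4,
          c * fderiv ℝ (opSumD T (Tmu l μ) S) p (Pi.single l (Pi.single μ (1:ℝ))) := by
        rw [mul_smul_comm, Finset.mul_sum]
        congr 1
        exact Finset.sum_congr rfl fun l _ => Finset.mul_sum _ _ _
    _ = Complex.I • ∑ l ∈ S, ∑ μ : Fin 4,
          fderiv ℝ (chronoBarD T (Tmu l μ) S) p (Pi.single l (Pi.single μ (1:ℝ))) := by
        congr 1
        exact Finset.sum_congr rfl fun l _ => Finset.sum_congr rfl fun μ _ => (hRHS l μ).symm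
end
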